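/- arXiv:2307.12801 — 2 statements merged into one kernel-verified Lean document; each statement's English description precedes it below -/
import Mathlib

section
/- Let N ∈ ℕ, let (ξ_ij)_{1≤i,j≤N} be nonnegative real numbers, and let D : ℝ → ℝ be Lipschitz with constant L. Let a, b ∈ ℝ^N and set ζ := a − b. Then | (1/N²) Σ_{i=1}^N Σ_{j=1}^N ξ_ij ( D(a_j − a_i) − D(b_j − b_i) ) ζ_i | ≤ L (α_N + γ_N) ‖ζ‖_{2,N}², where α_N := ((1/N²) Σ_{i,j} ξ_ij²)^{1/2} and γ_N := max_{1≤i≤N} (1/N) Σ_{j=1}^N ξ_ij. -/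
open MeasureTheory ProbabilityTheory Real

noncomputable section

/-- The interval `[0,1]`. -/
def I01 : Set ℝ := Set.Icc 0 1

/-- The weighted Euclidean norm `‖v‖_{2,N} = ((1/N) ∑ i, v i ^ 2)^{1/2}` on `ℝ^N`. -/
def norm2N (N : ℕ) (v : Fin N → ℝ) : ℝ :=
  Real.sqrt ((1 / (N : ℝ)) * ∑ i, v i ^ 2)

/-- The key deterministic estimate in the proof of Theorem 2.4: the Lipschitz interaction
term is bounded by `L (α_N + γ_N) ‖ζ‖_{2,N}²` where `ζ = a − b`. -/
theorem interaction_term_bound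
    (N : ℕ) (hN : 0 < N) (ξ : Fin N → Fin N → ℝ) (hξ : ∀ i j, 0 ≤ ξ i j)
    (D : ℝ → ℝ) (L : ℝ) (hL : ∀ a b, |D a - D b| ≤ L * |a - b|)
    (a b : Fin N → ℝ) :
    |(1 / (N : ℝ) ^ 2) *
        ∑ i, ∑ j, ξ i j * (D (a j - a i) - D (b j - b i)) * (a i - b i)| ≤
      L * (Real.sqrt ((1 / (N : ℝ) ^ 2) * ∑ i, ∑ j, ξ i j ^ 2) +
          ⨆ i, (1 / (N : ℝ)) * ∑ j, ξ i j) *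
        norm2N N (fun i => a i - b i) ^ 2 := by
  have hNpos : (0:ℝ) < N := by exact_mod_cast hN
  set ζ : Fin N → ℝ := fun i => a i - b i with hζdef
  have hL0 : 0 ≤ L := by
    have h := hL 1 0
    simp only [sub_zero, abs_one, mul_one] at h
    exact (abs_nonneg _).trans h
  have hZ0 : 0 ≤ ∑ i, ζ i ^ 2 := Finset.sum_nonneg fun i _ => sq_nonneg _
  have hnorm : norm2N N ζ ^ 2 = (1 / (N : ℝ)) * ∑ i, ζ i ^ 2 := by
    rw [norm2N, Real.sq_sqrt (by positivity)]
  -- pointwise bound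
  have hpt : ∀ i j, |ξ i j * (D (a j - a i) - D (b j - b i)) * (a i - b i)| ≤
      L * (ξ i j * (|ζ i| * |ζ j|)) + L * (ξ i j * ζ i ^ 2) := by
    intro i j
    have h1 : |D (a j - a i) - D (b j - b i)| ≤ L * (|ζ j| + |ζ i|) := by
      calc |D (a j - a i) - D (b j - b i)| ≤ L * |(a j - a i) - (b j - b i)| := hL _ _
        _ = L * |ζ j - ζ i| := by rw [hζdef]; ring_nf
        _ ≤ L * (|ζ j| + |ζ i|) := by
            refine mul_le_mul_of_nonneg_left ?_ hL0
            rw [sub_eq_add_neg]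
            exact (abs_add_le _ _).trans (by rw [abs_neg])
    have h2 : |ξ i j * (D (a j - a i) - D (b j - b i)) * (a i - b i)| =
        ξ i j * |D (a j - a i) - D (b j - b i)| * |ζ i| := by
      rw [abs_mul, abs_mul, abs_of_nonneg (hξ i j)]
    rw [h2]
    calc ξ i j * |D (a j - a i) - D (b j - b i)| * |ζ i|
        ≤ ξ i j * (L * (|ζ j| + |ζ i|)) * |ζ i| :=
          mul_le_mul_of_nonneg_right
            (mul_le_mul_of_nonneg_left h1 (hξ i j)) (abs_nonneg _)
      _ = L * (ξ i j * (|ζ i| * |ζ j|)) + L * (ξ i j * ζ i ^ 2) := by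
          rw [← sq_abs (ζ i)]; ring
  -- abbreviations
  set S1 : ℝ := ∑ i, ∑ j, ξ i j * (|ζ i| * |ζ j|) with hS1
  set S2 : ℝ := ∑ i, ∑ j, ξ i j * ζ i ^ 2 with hS2
  have habs : |(1 / (N : ℝ) ^ 2) *
        ∑ i, ∑ j, ξ i j * (D (a j - a i) - D (b j - b i)) * (a i - b i)| ≤
      (1 / (N : ℝ) ^ 2) * (L * S1 + L * S2) := by
    rw [abs_mul, abs_of_nonneg (by positivity : (0:ℝ) ≤ 1 / (N:ℝ)^2)]
    refine mul_le_mul_of_nonneg_left ?_ (by positivity)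
    calc |∑ i, ∑ j, ξ i j * (D (a j - a i) - D (b j - b i)) * (a i - b i)|
        ≤ ∑ i, ∑ j, |ξ i j * (D (a j - a i) - D (b j - b i)) * (a i - b i)| :=
          (Finset.abs_sum_le_sum_abs _ _).trans
            (Finset.sum_le_sum fun i _ => Finset.abs_sum_le_sum_abs _ _)
      _ ≤ ∑ i, ∑ j, (L * (ξ i j * (|ζ i| * |ζ j|)) + L * (ξ i j * ζ i ^ 2)) :=
          Finset.sum_le_sum fun i _ => Finset.sum_le_sum fun j _ => hpt i j
      _ = L * S1 + L * S2 := by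
          rw [hS1, hS2]
          simp [Finset.sum_add_distrib, Finset.mul_sum]
  -- Cauchy-Schwarz bound for S1
  have hCS : S1 ≤ Real.sqrt (∑ i, ∑ j, ξ i j ^ 2) * (∑ i, ζ i ^ 2) := by
    have key := Real.sum_mul_le_sqrt_mul_sqrt (Finset.univ : Finset (Fin N × Fin N))
      (fun p => ξ p.1 p.2) (fun p => |ζ p.1| * |ζ p.2|)
    have e1 : ∑ p : Fin N × Fin N, ξ p.1 p.2 * (|ζ p.1| * |ζ p.2|) = S1 := by
      rw [hS1, Fintype.sum_prod_type]
    have e2 : ∑ p : Fin N × Fin N, ξ p.1 p.2 ^ 2 = ∑ i, ∑ j, ξ i j ^ 2 := by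
      rw [Fintype.sum_prod_type]
    have e3 : ∑ p : Fin N × Fin N, (|ζ p.1| * |ζ p.2|) ^ 2 = (∑ i, ζ i ^ 2) ^ 2 := by
      rw [Fintype.sum_prod_type, sq (∑ i, ζ i ^ 2), Finset.sum_mul_sum]
      simp [mul_pow, sq_abs]
    rw [e1, e2, e3] at key
    rwa [Real.sqrt_sq hZ0] at key
  -- sup bound for S2
  have hsup : ∀ i : Fin N, (1 / (N : ℝ)) * ∑ j, ξ i j ≤ ⨆ i, (1 / (N : ℝ)) * ∑ j, ξ i j :=
    fun i => le_ciSup (f := fun i : Fin N => (1 / (N : ℝ)) * ∑ j, ξ i j)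
      (Set.Finite.bddAbove (Set.finite_range _)) i
  set γ : ℝ := ⨆ i, (1 / (N : ℝ)) * ∑ j, ξ i j with hγ
  have hS2bound : (1 / (N : ℝ) ^ 2) * S2 ≤ γ * ((1 / (N : ℝ)) * ∑ i, ζ i ^ 2) := by
    have : (1 / (N : ℝ) ^ 2) * S2 = (1 / (N : ℝ)) * ∑ i, (ζ i ^ 2 * ((1 / (N : ℝ)) * ∑ j, ξ i j)) := by
      rw [hS2]
      simp_rw [← Finset.sum_mul]
      rw [Finset.mul_sum, Finset.mul_sum]
      refine Finset.sum_congr rfl fun i _ => ?_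
      field_simp
    rw [this]
    have : ∑ i, (ζ i ^ 2 * ((1 / (N : ℝ)) * ∑ j, ξ i j)) ≤ ∑ i, (ζ i ^ 2 * γ) :=
      Finset.sum_le_sum fun i _ => mul_le_mul_of_nonneg_left (hsup i) (sq_nonneg _)
    calc (1 / (N : ℝ)) * ∑ i, (ζ i ^ 2 * ((1 / (N : ℝ)) * ∑ j, ξ i j))
        ≤ (1 / (N : ℝ)) * ∑ i, (ζ i ^ 2 * γ) :=
          mul_le_mul_of_nonneg_left this (by positivity)
      _ = γ * ((1 / (N : ℝ)) * ∑ i, ζ i ^ 2) := by rw [← Finset.sum_mul]; ring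
  -- α rewrite
  have hα : Real.sqrt ((1 / (N : ℝ) ^ 2) * ∑ i, ∑ j, ξ i j ^ 2) =
      (1 / (N : ℝ)) * Real.sqrt (∑ i, ∑ j, ξ i j ^ 2) := by
    rw [Real.sqrt_mul (by positivity)]
    congr 1
    rw [show (1 / (N:ℝ)^2) = (1/(N:ℝ))^2 by ring, Real.sqrt_sq (by positivity)]
  have hS1bound : (1 / (N : ℝ) ^ 2) * S1 ≤
      Real.sqrt ((1 / (N : ℝ) ^ 2) * ∑ i, ∑ j, ξ i j ^ 2) * ((1 / (N : ℝ)) * ∑ i, ζ i ^ 2) := by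
    rw [hα]
    calc (1 / (N : ℝ) ^ 2) * S1
        ≤ (1 / (N : ℝ) ^ 2) * (Real.sqrt (∑ i, ∑ j, ξ i j ^ 2) * (∑ i, ζ i ^ 2)) :=
          mul_le_mul_of_nonneg_left hCS (by positivity)
      _ = (1 / (N : ℝ)) * Real.sqrt (∑ i, ∑ j, ξ i j ^ 2) * ((1 / (N : ℝ)) * ∑ i, ζ i ^ 2) := by
          ring
  -- combine
  refine habs.trans ?_
  rw [hnorm]
  have expand : L * (Real.sqrt ((1 / (N : ℝ) ^ 2) * ∑ i, ∑ j, ξ i j ^ 2) + γ) *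
      ((1 / (N : ℝ)) * ∑ i, ζ i ^ 2) =
      L * (Real.sqrt ((1 / (N : ℝ) ^ 2) * ∑ i, ∑ j, ξ i j ^ 2) * ((1 / (N : ℝ)) * ∑ i, ζ i ^ 2)) +
      L * (γ * ((1 / (N : ℝ)) * ∑ i, ζ i ^ 2)) := by ring
  rw [expand]
  have lhs_eq : (1 / (N : ℝ) ^ 2) * (L * S1 + L * S2) =
      L * ((1 / (N : ℝ) ^ 2) * S1) + L * ((1 / (N : ℝ) ^ 2) * S2) := by ring
  rw [lhs_eq]
  exact add_le_add (mul_le_mul_of_nonneg_left hS1bound hL0)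
    (mul_le_mul_of_nonneg_left hS2bound hL0)

end
end

section
/- Let N ∈ ℕ, let (ξ_ij)_{1≤i,j≤N} be nonnegative real numbers and let D : ℝ → ℝ be bounded and Lipschitz with constant L. Suppose u, v : [t₀, t₁] → ℝ^N both solve the system d/dt w_i(t) = (1/N) Σ_{j=1}^N ξ_ij D(w_j(t) − w_i(t)) for i ∈ {1,…,N}. Then for all t ∈ [t₀, t₁], ‖u(t) − v(t)‖_{2,N} ≤ e^{L (α_N + γ_N)(t − t₀)} ‖u(t₀) − v(t₀)‖_{2,N}, where α_N := ((1/N²) Σ_{i,j} ξ_ij²)^{1/2} and γ_N := max_{1≤i≤N} (1/N) Σ_{j=1}^N ξ_ij. -/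
open MeasureTheory ProbabilityTheory Real

noncomputable section

/-!
Write the system as `w' = F w` on `ℓ²(Fin N)`, with `F w i = ∑ j, a i j * D (w j - w i)` and
`a i j = ξ i j / N`. By Grönwall's inequality it suffices that `F` is Lipschitz with constant
`L (α_N + γ_N)`. For `z = x - y` the Lipschitz bound on `D` gives
`|F x i - F y i| ≤ L ∑ j, a i j |z j| + L (∑ j, a i j) |z i|`: the first term is the matrix `a`
applied to `|z|`, whose norm is at most the Frobenius norm `α_N` of `a` times `‖z‖`, and the second
is at most `L γ_N |z i|`. Finally `‖·‖_{2,N}` is `√(1/N)` times the Euclidean norm.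
-/

open Set Matrix WithLp

lemma EuclideanSpace.norm_le_norm_of_abs_le {ι : Type*} [Fintype ι] {x y : EuclideanSpace ℝ ι}
    (h : ∀ i, |x i| ≤ y i) : ‖x‖ ≤ ‖y‖ := by
  rw [EuclideanSpace.norm_eq, EuclideanSpace.norm_eq]
  gcongr with i
  exact (h i).trans (le_abs_self _)

lemma EuclideanSpace.norm_toLp_abs {ι : Type*} [Fintype ι] (x : EuclideanSpace ℝ ι) :
    ‖toLp 2 fun i => |x i|‖ = ‖x‖ := by
  simp [EuclideanSpace.norm_eq]

open scoped Matrix.Norms.Frobenius in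
lemma Matrix.norm_toLp_mulVec_le {m n : Type*} [Fintype m] [Fintype n] (A : Matrix m n ℝ)
    (x : EuclideanSpace ℝ n) : ‖toLp 2 (A *ᵥ ofLp x)‖ ≤ √(∑ i, ∑ j, A i j ^ 2) * ‖x‖ := by
  have hA : ‖A‖ = √(∑ i, ∑ j, A i j ^ 2) := by
    simp [frobenius_norm_def, Real.sqrt_eq_rpow]
  calc ‖toLp 2 (A *ᵥ ofLp x)‖ = ‖A * replicateCol Unit (ofLp x)‖ := by
        rw [← replicateCol_mulVec, frobenius_norm_replicateCol]
    _ ≤ ‖A‖ * ‖replicateCol Unit (ofLp x)‖ := frobenius_norm_mul _ _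
    _ = √(∑ i, ∑ j, A i j ^ 2) * ‖x‖ := by rw [frobenius_norm_replicateCol, hA, toLp_ofLp]

lemma nonneg_of_abs_sub_le_mul_abs_sub {D : ℝ → ℝ} {L : ℝ}
    (hD : ∀ s t, |D s - D t| ≤ L * |s - t|) : 0 ≤ L := by
  simpa using (abs_nonneg _).trans (hD 1 0)

section InteractionField

variable {ι : Type*} [Fintype ι]

/-- The paper's factor `1/N` is absorbed into the weights `a`. -/
def interactionField (a : ι → ι → ℝ) (D : ℝ → ℝ) (w : EuclideanSpace ℝ ι) :
    EuclideanSpace ℝ ι :=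
  toLp 2 fun i => ∑ j, a i j * D (w j - w i)

variable {a : ι → ι → ℝ} {D : ℝ → ℝ} {L : ℝ}

lemma abs_interactionField_sub_le (ha : ∀ i j, 0 ≤ a i j)
    (hD : ∀ s t, |D s - D t| ≤ L * |s - t|) {γ : ℝ} (hγ : ∀ i, ∑ j, a i j ≤ γ)
    (x y : EuclideanSpace ℝ ι) (i : ι) :
    |(interactionField a D x - interactionField a D y) i| ≤
      L * (a *ᵥ fun j => |(x - y) j|) i + L * γ * |(x - y) i| := by
  have hL := nonneg_of_abs_sub_le_mul_abs_sub hD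
  set z := x - y
  have hterm (j : ι) : |a i j * (D (x j - x i) - D (y j - y i))| ≤
      L * (a i j * |z j|) + L * |z i| * a i j := by
    have hz : (x j - x i) - (y j - y i) = z j - z i := by simp only [z, PiLp.sub_apply]; ring
    rw [abs_mul, abs_of_nonneg (ha i j)]
    calc a i j * |D (x j - x i) - D (y j - y i)| ≤ a i j * (L * |z j - z i|) :=
          mul_le_mul_of_nonneg_left (hz ▸ hD _ _) (ha i j)
      _ ≤ a i j * (L * (|z j| + |z i|)) :=
          mul_le_mul_of_nonneg_left (mul_le_mul_of_nonneg_left (abs_sub _ _) hL) (ha i j)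
      _ = L * (a i j * |z j|) + L * |z i| * a i j := by ring
  calc |(interactionField a D x - interactionField a D y) i|
      = |∑ j, a i j * (D (x j - x i) - D (y j - y i))| := by
        simp [interactionField, mul_sub, Finset.sum_sub_distrib]
    _ ≤ ∑ j, (L * (a i j * |z j|) + L * |z i| * a i j) :=
        (Finset.abs_sum_le_sum_abs _ _).trans (Finset.sum_le_sum fun j _ => hterm j)
    _ = L * (a *ᵥ fun j => |z j|) i + L * |z i| * ∑ j, a i j := by
        rw [Finset.sum_add_distrib, ← Finset.mul_sum, ← Finset.mul_sum]; rfl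
    _ ≤ L * (a *ᵥ fun j => |z j|) i + L * γ * |z i| := by
        have := mul_le_mul_of_nonneg_left (hγ i) (mul_nonneg hL (abs_nonneg (z i)))
        linarith

lemma dist_interactionField_le (ha : ∀ i j, 0 ≤ a i j)
    (hD : ∀ s t, |D s - D t| ≤ L * |s - t|) (x y : EuclideanSpace ℝ ι) :
    dist (interactionField a D x) (interactionField a D y) ≤
      L * (√(∑ i, ∑ j, a i j ^ 2) + ⨆ i, ∑ j, a i j) * dist x y := by
  set γ := ⨆ i, ∑ j, a i j
  have hL := nonneg_of_abs_sub_le_mul_abs_sub hD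
  have hγ0 : 0 ≤ γ := Real.iSup_nonneg fun i => Finset.sum_nonneg fun j _ => ha i j
  have hγ (i : ι) : ∑ j, a i j ≤ γ :=
    le_ciSup (f := fun i => ∑ j, a i j) (Set.finite_range _).bddAbove i
  set z := x - y
  set zabs : EuclideanSpace ℝ ι := toLp 2 fun j => |z j|
  rw [dist_eq_norm, dist_eq_norm]
  calc ‖interactionField a D x - interactionField a D y‖
      ≤ ‖L • toLp 2 (a *ᵥ ofLp zabs) + (L * γ) • zabs‖ :=
        EuclideanSpace.norm_le_norm_of_abs_le fun i =>
          (abs_interactionField_sub_le ha hD hγ x y i).trans_eq (by simp [zabs, z])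
    _ ≤ L * ‖toLp 2 (a *ᵥ ofLp zabs)‖ + L * γ * ‖zabs‖ := by
        refine (norm_add_le _ _).trans_eq ?_
        rw [norm_smul, norm_smul, Real.norm_of_nonneg hL, Real.norm_of_nonneg (mul_nonneg hL hγ0)]
    _ ≤ L * (√(∑ i, ∑ j, a i j ^ 2) * ‖z‖) + L * γ * ‖z‖ := by
        rw [← EuclideanSpace.norm_toLp_abs z]
        gcongr
        exact Matrix.norm_toLp_mulVec_le a zabs
    _ = L * (√(∑ i, ∑ j, a i j ^ 2) + γ) * ‖z‖ := by ring

end InteractionField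

lemma PiLp.hasDerivAt_toLp {ι : Type*} [Fintype ι] (p : ENNReal) [Fact (1 ≤ p)] {f : ℝ → ι → ℝ}
    {f' : ι → ℝ} {t : ℝ} (h : ∀ i, HasDerivAt (fun s => f s i) (f' i) t) :
    HasDerivAt (fun s => toLp p (f s)) (toLp p f') t :=
  (PiLp.hasFDerivAt_toLp (𝕜 := ℝ) p (f t)).comp_hasDerivAt t (hasDerivAt_pi.2 h)

lemma norm2N_sub_eq_mul_dist (N : ℕ) (x y : Fin N → ℝ) :
    norm2N N (fun i => x i - y i) = √(1 / (N : ℝ)) * dist (toLp 2 x) (toLp 2 y) := by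
  rw [norm2N, Real.sqrt_mul (by positivity), EuclideanSpace.dist_eq]
  simp [Real.dist_eq, sq_abs]

lemma dist_le_of_hasDerivAt_trajectories {E : Type*} [NormedAddCommGroup E] [NormedSpace ℝ E]
    {F : E → E} {K : NNReal} (hF : LipschitzWith K F) {f g : ℝ → E} {a b : ℝ}
    (hf : ∀ t ∈ Icc a b, HasDerivAt f (F (f t)) t)
    (hg : ∀ t ∈ Icc a b, HasDerivAt g (F (g t)) t) :
    ∀ t ∈ Icc a b, dist (f t) (g t) ≤ dist (f a) (g a) * exp (K * (t - a)) :=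
  dist_le_of_trajectories_ODE (fun _ => hF)
    (fun t ht => (hf t ht).continuousAt.continuousWithinAt)
    (fun t ht => (hf t (Ico_subset_Icc_self ht)).hasDerivWithinAt)
    (fun t ht => (hg t ht).continuousAt.continuousWithinAt)
    (fun t ht => (hg t (Ico_subset_Icc_self ht)).hasDerivWithinAt) le_rfl

theorem gronwall_stability_general
    (N : ℕ) (ξ : Fin N → Fin N → ℝ) (hξ : ∀ i j, 0 ≤ ξ i j)
    (D : ℝ → ℝ) (L : ℝ)
    (hL : ∀ a b, |D a - D b| ≤ L * |a - b|)
    (t₀ t₁ : ℝ) (u v : ℝ → Fin N → ℝ)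
    (hu : ∀ i, ∀ t ∈ Set.Icc t₀ t₁, HasDerivAt (fun s => u s i)
      ((1 / (N : ℝ)) * ∑ j, ξ i j * D (u t j - u t i)) t)
    (hv : ∀ i, ∀ t ∈ Set.Icc t₀ t₁, HasDerivAt (fun s => v s i)
      ((1 / (N : ℝ)) * ∑ j, ξ i j * D (v t j - v t i)) t) :
    ∀ t ∈ Set.Icc t₀ t₁,
      norm2N N (fun i => u t i - v t i) ≤
        Real.exp (L * (Real.sqrt ((1 / (N : ℝ) ^ 2) * ∑ i, ∑ j, ξ i j ^ 2) +
            ⨆ i, (1 / (N : ℝ)) * ∑ j, ξ i j) * (t - t₀)) *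
          norm2N N (fun i => u t₀ i - v t₀ i) := by
  set a : Fin N → Fin N → ℝ := fun i j => 1 / N * ξ i j
  have ha : ∀ i j, 0 ≤ a i j := fun i j => mul_nonneg (by positivity) (hξ i j)
  set C := L * (√(∑ i, ∑ j, a i j ^ 2) + ⨆ i, ∑ j, a i j)
  have hC : 0 ≤ C := mul_nonneg (nonneg_of_abs_sub_le_mul_abs_sub hL)
    (add_nonneg (Real.sqrt_nonneg _)
      (Real.iSup_nonneg fun i => Finset.sum_nonneg fun j _ => ha i j))
  have hCeq : C = L * (√((1 / (N : ℝ) ^ 2) * ∑ i, ∑ j, ξ i j ^ 2) +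
      ⨆ i, (1 / (N : ℝ)) * ∑ j, ξ i j) := by
    simp [C, a, mul_pow, Finset.mul_sum]
  have hF : LipschitzWith C.toNNReal (interactionField a D) :=
    LipschitzWith.of_dist_le' (dist_interactionField_le ha hL)
  have hsol (w : ℝ → Fin N → ℝ) (hw : ∀ i, ∀ t ∈ Icc t₀ t₁, HasDerivAt (fun s => w s i)
      ((1 / (N : ℝ)) * ∑ j, ξ i j * D (w t j - w t i)) t) (t : ℝ) (ht : t ∈ Icc t₀ t₁) :
      HasDerivAt (fun s => toLp 2 (w s)) (interactionField a D (toLp 2 (w t))) t := by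
    convert PiLp.hasDerivAt_toLp 2 fun i => hw i t ht using 2
    simp [interactionField, a, Finset.mul_sum, mul_assoc]
  intro t ht
  have key := dist_le_of_hasDerivAt_trajectories hF (hsol u hu) (hsol v hv) t ht
  rw [Real.coe_toNNReal _ hC] at key
  rw [← hCeq, norm2N_sub_eq_mul_dist, norm2N_sub_eq_mul_dist]
  calc √(1 / (N : ℝ)) * dist (toLp 2 (u t)) (toLp 2 (v t))
      ≤ √(1 / (N : ℝ)) * (dist (toLp 2 (u t₀)) (toLp 2 (v t₀)) * exp (C * (t - t₀))) :=
        mul_le_mul_of_nonneg_left key (Real.sqrt_nonneg _)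
    _ = exp (C * (t - t₀)) * (√(1 / (N : ℝ)) * dist (toLp 2 (u t₀)) (toLp 2 (v t₀))) := by ring

/-- Gronwall-type stability estimate: two solutions of the particle system with the same
nonnegative weights satisfy
`‖u(t) − v(t)‖_{2,N} ≤ e^{L(α_N + γ_N)(t − t₀)} ‖u(t₀) − v(t₀)‖_{2,N}`. -/
theorem gronwall_stability
    (N : ℕ) (hN : 0 < N) (ξ : Fin N → Fin N → ℝ) (hξ : ∀ i j, 0 ≤ ξ i j)
    (D : ℝ → ℝ) (K L : ℝ) (hK : ∀ z, |D z| ≤ K)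
    (hL : ∀ a b, |D a - D b| ≤ L * |a - b|)
    (t₀ t₁ : ℝ) (u v : ℝ → Fin N → ℝ)
    (hu : ∀ i, ∀ t ∈ Set.Icc t₀ t₁, HasDerivAt (fun s => u s i)
      ((1 / (N : ℝ)) * ∑ j, ξ i j * D (u t j - u t i)) t)
    (hv : ∀ i, ∀ t ∈ Set.Icc t₀ t₁, HasDerivAt (fun s => v s i)
      ((1 / (N : ℝ)) * ∑ j, ξ i j * D (v t j - v t i)) t) :
    ∀ t ∈ Set.Icc t₀ t₁,
      norm2N N (fun i => u t i - v t i) ≤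
        Real.exp (L * (Real.sqrt ((1 / (N : ℝ) ^ 2) * ∑ i, ∑ j, ξ i j ^ 2) +
            ⨆ i, (1 / (N : ℝ)) * ∑ j, ξ i j) * (t - t₀)) *
          norm2N N (fun i => u t₀ i - v t₀ i) :=
  gronwall_stability_general N ξ hξ D L hL t₀ t₁ u v hu hv
end
end
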